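/- arXiv:1010.0561 — 3 statements merged into one kernel-verified Lean document; each statement's English description precedes it below -/
import Mathlib

section
/- The set G of homeomorphisms f of ℝ such that f - id and f⁻¹ - id belong to W^{1,∞}(ℝ) and f' - 1 belongs to L²(ℝ) forms a group under composition. -/
/-!
Everything rests on one estimate: if `e` is a homeomorphism of `ℝ` with `e⁻¹` `K`-Lipschitz,
then `e` pushes Lebesgue measure forward to at most `K` times Lebesgue measure, because a
`K`-Lipschitz map enlarges one-dimensional Hausdorff measure by at most the factor `K`.
Hence precomposition with `e` preserves null sets and `Lᵖ`. With Rademacher's theorem this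
gives the chain rule almost everywhere, and the identities
`(g ∘ f)' - 1 = (g' ∘ f - 1) f' + (f' - 1)` and `(f⁻¹)' - 1 = -(f' ∘ f⁻¹ - 1) (f⁻¹)'`
write the derivative conditions for `g ∘ f` and `f⁻¹` as `L²` functions times bounded ones.
The `W^{1,∞}` conditions pass to `g ∘ f` through `g ∘ f - id = (g - id) ∘ f + (f - id)`.
-/

open MeasureTheory
open scoped ENNReal NNReal

/-- `g ∈ W^{1,∞}(ℝ)`: `g` is bounded and Lipschitz. -/
def MemW1infty (g : ℝ → ℝ) : Prop :=
  (∃ C : ℝ, ∀ x, |g x| ≤ C) ∧ ∃ K : NNReal, LipschitzWith K g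

/-- Membership in the relabeling set `G`: `f` is a homeomorphism of `ℝ` with
`f - id, f⁻¹ - id ∈ W^{1,∞}(ℝ)` and `f' - 1 ∈ L²(ℝ)`. -/
def InRelabelGroup (f : ℝ ≃ₜ ℝ) : Prop :=
  MemW1infty (fun x => f x - x) ∧ MemW1infty (fun x => f.symm x - x) ∧
  MemLp (fun x => deriv (⇑f) x - 1) 2 (volume : Measure ℝ)

namespace LipschitzWith

variable {f : ℝ → ℝ} {K : ℝ≥0}

lemma volume_image_le (hf : LipschitzWith K f) (s : Set ℝ) :
    volume (f '' s) ≤ K * volume s := by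
  simpa [← hausdorffMeasure_real] using hf.hausdorffMeasure_image_le zero_le_one s

lemma of_sub_id (hf : LipschitzWith K fun x => f x - x) : LipschitzWith (K + 1) f := by
  simpa using hf.add LipschitzWith.id

lemma memLp_top_deriv {μ : Measure ℝ} (hf : LipschitzWith K f) : MemLp (deriv f) ∞ μ :=
  memLp_top_of_bound (measurable_deriv f).aestronglyMeasurable K
    (ae_of_all _ fun _ => norm_deriv_le_of_lipschitz hf)

end LipschitzWith

namespace Homeomorph

variable {e : ℝ ≃ₜ ℝ} {K : ℝ≥0}

lemma map_volume_le_smul (he : LipschitzWith K e.symm) :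
    volume.map e ≤ (K : ℝ≥0∞) • volume := by
  refine Measure.le_iff.2 fun s hs => ?_
  rw [Measure.map_apply e.measurable hs, ← e.image_symm]
  exact he.volume_image_le s

lemma quasiMeasurePreserving_volume (he : LipschitzWith K e.symm) :
    Measure.QuasiMeasurePreserving e volume volume :=
  ⟨e.measurable, Measure.absolutelyContinuous_of_le_smul (map_volume_le_smul he)⟩

lemma memLp_comp {E : Type*} [NormedAddCommGroup E] {p : ℝ≥0∞} {h : ℝ → E}
    (he : LipschitzWith K e.symm) (hh : MemLp h p volume) : MemLp (h ∘ e) p volume :=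
  (hh.of_measure_le_smul ENNReal.coe_ne_top (map_volume_le_smul he)).comp_of_map
    e.measurable.aemeasurable

end Homeomorph

lemma deriv_comp_ae_eq {μ : Measure ℝ} {f g : ℝ → ℝ} (hf : ∀ᵐ x ∂μ, DifferentiableAt ℝ f x)
    (hg : ∀ᵐ x ∂μ, DifferentiableAt ℝ g (f x)) :
    deriv (g ∘ f) =ᵐ[μ] fun x => deriv g (f x) * deriv f x := by
  filter_upwards [hf, hg] with x hfx hgx
  exact deriv_comp x hgx hfx

section DerivSubOne

variable {p : ℝ≥0∞} {e : ℝ ≃ₜ ℝ} {K K' : ℝ≥0}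

lemma memLp_deriv_comp_sub_one {g : ℝ → ℝ} {Kg : ℝ≥0} (he : LipschitzWith K e)
    (he' : LipschitzWith K' e.symm) (hg : LipschitzWith Kg g)
    (hep : MemLp (fun x => deriv e x - 1) p volume)
    (hgp : MemLp (fun x => deriv g x - 1) p volume) :
    MemLp (fun x => deriv (g ∘ e) x - 1) p volume := by
  have hchain : deriv (g ∘ e) =ᵐ[volume] fun x => deriv g (e x) * deriv e x :=
    deriv_comp_ae_eq he.ae_differentiableAt_of_real
      ((e.quasiMeasurePreserving_volume he').ae hg.ae_differentiableAt_of_real)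
  have hgep : MemLp (fun x => (deriv g (e x) - 1) * deriv e x) p volume :=
    he.memLp_top_deriv.mul' (e.memLp_comp he' hgp)
  refine (hgep.add hep).ae_eq ?_
  filter_upwards [hchain] with x hx
  simp only [Pi.add_apply, hx]
  ring

lemma memLp_deriv_symm_sub_one (he : LipschitzWith K e) (he' : LipschitzWith K' e.symm)
    (hep : MemLp (fun x => deriv e x - 1) p volume) :
    MemLp (fun y => deriv e.symm y - 1) p volume := by
  have hinv : ∀ᵐ y, deriv e (e.symm y) * deriv e.symm y = 1 := by
    have hchain := deriv_comp_ae_eq (g := e) he'.ae_differentiableAt_of_real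
      ((e.symm.quasiMeasurePreserving_volume (by simpa using he)).ae
        he.ae_differentiableAt_of_real)
    filter_upwards [hchain] with y hy
    rw [← hy, e.self_comp_symm, deriv_id]
  have hep' : MemLp (fun y => (deriv e (e.symm y) - 1) * deriv e.symm y) p volume :=
    he'.memLp_top_deriv.mul' (e.symm.memLp_comp (by simpa using he) hep)
  refine hep'.neg.ae_eq ?_
  filter_upwards [hinv] with y hy
  simp only [Pi.neg_apply]
  linear_combination -hy

end DerivSubOne

lemma memW1infty_zero : MemW1infty fun _ => 0 :=
  ⟨⟨0, by simp⟩, 0, LipschitzWith.const 0⟩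

namespace MemW1infty

variable {f g : ℝ → ℝ}

lemma exists_lipschitzWith_of_sub_id (hf : MemW1infty fun x => f x - x) :
    ∃ K, LipschitzWith K f :=
  let ⟨_, _, hK⟩ := hf
  ⟨_, hK.of_sub_id⟩

lemma comp_sub_id (hf : MemW1infty fun x => f x - x) (hg : MemW1infty fun x => g x - x) :
    MemW1infty fun x => g (f x) - x := by
  obtain ⟨⟨Cf, hCf⟩, Kf, hKf⟩ := hf
  obtain ⟨⟨Cg, hCg⟩, Kg, hKg⟩ := hg
  have hsplit : (fun x => g (f x) - x) = (fun y => g y - y) ∘ f + fun x => f x - x := by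
    ext x
    simp
  refine ⟨⟨Cg + Cf, fun x => ?_⟩, Kg * (Kf + 1) + Kf, ?_⟩
  · exact (abs_sub_le _ (f x) _).trans (add_le_add (hCg (f x)) (hCf x))
  · rw [hsplit]
    exact (hKg.comp hKf.of_sub_id).add hKf

end MemW1infty

namespace InRelabelGroup

variable {f g : ℝ ≃ₜ ℝ}

lemma refl : InRelabelGroup (Homeomorph.refl ℝ) := by
  simpa [InRelabelGroup] using memW1infty_zero

lemma trans (hf : InRelabelGroup f) (hg : InRelabelGroup g) : InRelabelGroup (f.trans g) := by
  obtain ⟨hf₁, hf₂, hfp⟩ := hf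
  obtain ⟨hg₁, hg₂, hgp⟩ := hg
  obtain ⟨_, hKf⟩ := hf₁.exists_lipschitzWith_of_sub_id
  obtain ⟨_, hKf'⟩ := hf₂.exists_lipschitzWith_of_sub_id
  obtain ⟨_, hKg⟩ := hg₁.exists_lipschitzWith_of_sub_id
  exact ⟨hf₁.comp_sub_id hg₁, hg₂.comp_sub_id hf₂,
    memLp_deriv_comp_sub_one hKf hKf' hKg hfp hgp⟩

lemma symm (hf : InRelabelGroup f) : InRelabelGroup f.symm := by
  obtain ⟨hf₁, hf₂, hfp⟩ := hf
  obtain ⟨_, hKf⟩ := hf₁.exists_lipschitzWith_of_sub_id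
  obtain ⟨_, hKf'⟩ := hf₂.exists_lipschitzWith_of_sub_id
  exact ⟨hf₂, hf₁, memLp_deriv_symm_sub_one hKf hKf' hfp⟩

end InRelabelGroup

/-- The set `G` forms a group under composition: it contains the identity and
is closed under composition and inversion. -/
theorem stmt2 :
    InRelabelGroup (Homeomorph.refl ℝ) ∧
    (∀ f g : ℝ ≃ₜ ℝ, InRelabelGroup f → InRelabelGroup g →
      InRelabelGroup (f.trans g)) ∧
    (∀ f : ℝ ≃ₜ ℝ, InRelabelGroup f → InRelabelGroup f.symm) :=
  ⟨.refl, fun _ _ => .trans, fun _ => .symm⟩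
end

section
/- Suppose the ODE system ζ_t = U, U_t = -Q, H_t = U³ - 2PU preserves the a.e. identity y_ξ H_ξ = y_ξ²U² + U_ξ², where y = ζ + id. If at time t, y_ξ(t,ξ), H_ξ(t,ξ) ≥ 0 and y_ξ(0,ξ) + H_ξ(0,ξ) ≥ 1/c for a.e. ξ, and the coefficients of the linearized system for (y_ξ, U_ξ, H_ξ) are bounded by a constant C on [0,T], then y_ξ(t,ξ) + H_ξ(t,ξ) ≥ (2/(3c)) e^{-CT} for all t ∈ [0,T] and a.e. ξ. Similarly if y_ξ(0) + H_ξ(0) ≤ c then y_ξ(t) + H_ξ(t) ≤ (3c/2) e^{CT}. -/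
/-!
Along the flow, `N = |y_ξ| + |H_ξ| + |U_ξ|` is the ℓ¹ norm of the solution of a linear system
whose coefficients are bounded by `C`, so Grönwall's inequality, run forward and backward in time,
gives `e^{-Ct} N(0) ≤ N(t) ≤ e^{Ct} N(0)`. With `y_ξ, H_ξ ≥ 0`, the compatibility identity gives
`|U_ξ| ≤ √(y_ξ H_ξ) ≤ (y_ξ + H_ξ)/2`, so `N` and `y_ξ + H_ξ` agree up to the factor `3/2`.
-/

open MeasureTheory Real Set

section Gronwall

variable {E : Type*} [NormedAddCommGroup E] [NormedSpace ℝ E] {f f' : ℝ → E} {C a b t : ℝ}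

theorem norm_le_exp_mul_norm_of_norm_deriv_le (hf : ∀ s ∈ Icc a b, HasDerivAt f (f' s) s)
    (hbound : ∀ s ∈ Icc a b, ‖f' s‖ ≤ C * ‖f s‖) (ht : t ∈ Icc a b) :
    ‖f t‖ ≤ exp (C * (t - a)) * ‖f a‖ := by
  have := norm_le_gronwallBound_of_norm_deriv_right_le (ε := 0)
    (fun s hs => (hf s hs).continuousAt.continuousWithinAt)
    (fun s hs => (hf s (Ico_subset_Icc_self hs)).hasDerivWithinAt) le_rfl
    (fun s hs => by simpa using hbound s (Ico_subset_Icc_self hs)) t ht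
  rwa [gronwallBound_ε0, mul_comm] at this

theorem norm_le_exp_mul_norm_of_norm_deriv_le_rev (hf : ∀ s ∈ Icc a b, HasDerivAt f (f' s) s)
    (hbound : ∀ s ∈ Icc a b, ‖f' s‖ ≤ C * ‖f s‖) (ht : t ∈ Icc a b) :
    ‖f a‖ ≤ exp (C * (t - a)) * ‖f t‖ := by
  have mem_of_mem {r : ℝ} (hr : r ∈ Icc a t) : a + t - r ∈ Icc a b :=
    ⟨by linarith [hr.2], by linarith [hr.1, ht.2]⟩
  have hg (r : ℝ) (hr : r ∈ Icc a t) :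
      HasDerivAt (fun r => f (a + t - r)) (-f' (a + t - r)) r := by
    simpa [Function.comp_def] using
      (hf _ (mem_of_mem hr)).scomp r ((hasDerivAt_id r).const_sub (a + t))
  simpa using norm_le_exp_mul_norm_of_norm_deriv_le hg
    (fun r hr => by simpa using hbound _ (mem_of_mem hr)) (right_mem_Icc.2 ht.1)

end Gronwall

section LinearSystem

variable {ι : Type*} [Fintype ι] {x x' : ι → ℝ → ℝ} {C a b t : ℝ}

theorem sum_abs_le_exp_mul_sum_abs_of_sum_abs_deriv_le
    (hx : ∀ i, ∀ s ∈ Icc a b, HasDerivAt (x i) (x' i s) s)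
    (hbound : ∀ s ∈ Icc a b, ∑ i, |x' i s| ≤ C * ∑ i, |x i s|) (ht : t ∈ Icc a b) :
    ∑ i, |x i t| ≤ exp (C * (t - a)) * ∑ i, |x i a| ∧
      ∑ i, |x i a| ≤ exp (C * (t - a)) * ∑ i, |x i t| := by
  let X (s : ℝ) : PiLp 1 (fun _ : ι => ℝ) := WithLp.toLp 1 fun i => x i s
  let X' (s : ℝ) : PiLp 1 (fun _ : ι => ℝ) := WithLp.toLp 1 fun i => x' i s
  have norm_X (s : ℝ) : ‖X s‖ = ∑ i, |x i s| := by simp [X, PiLp.norm_eq_of_L1]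
  have norm_X' (s : ℝ) : ‖X' s‖ = ∑ i, |x' i s| := by simp [X', PiLp.norm_eq_of_L1]
  have hX (s : ℝ) (hs : s ∈ Icc a b) : HasDerivAt X (X' s) s :=
    (PiLp.hasFDerivAt_toLp 1 _).comp_hasDerivAt s (hasDerivAt_pi.2 fun i => hx i s hs)
  have hXbound (s : ℝ) (hs : s ∈ Icc a b) : ‖X' s‖ ≤ C * ‖X s‖ := by
    rw [norm_X, norm_X']
    exact hbound s hs
  have forward := norm_le_exp_mul_norm_of_norm_deriv_le hX hXbound ht
  have backward := norm_le_exp_mul_norm_of_norm_deriv_le_rev hX hXbound ht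
  rw [norm_X, norm_X] at forward backward
  exact ⟨forward, backward⟩

end LinearSystem

theorem abs_le_add_div_two_of_sq_le_mul {p q u : ℝ} (hp : 0 ≤ p) (hq : 0 ≤ q)
    (h : u ^ 2 ≤ p * q) : |u| ≤ (p + q) / 2 :=
  abs_le_of_sq_le_sq (by nlinarith [four_mul_le_sq_add p q]) (by positivity)

theorem exp_bounds_add_of_sq_le_mul {A B U A' B' U' : ℝ → ℝ} {C T t : ℝ} (hC : 0 ≤ C)
    (hA : ∀ s ∈ Icc 0 T, HasDerivAt A (A' s) s) (hB : ∀ s ∈ Icc 0 T, HasDerivAt B (B' s) s)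
    (hU : ∀ s ∈ Icc 0 T, HasDerivAt U (U' s) s)
    (hA_nonneg : ∀ s ∈ Icc 0 T, 0 ≤ A s) (hB_nonneg : ∀ s ∈ Icc 0 T, 0 ≤ B s)
    (hUAB : ∀ s ∈ Icc 0 T, U s ^ 2 ≤ A s * B s)
    (hbound : ∀ s ∈ Icc 0 T, |A' s| + |B' s| + |U' s| ≤ C * (|A s| + |B s| + |U s|))
    (ht : t ∈ Icc 0 T) :
    2 / 3 * exp (-(C * T)) * (A 0 + B 0) ≤ A t + B t ∧
      A t + B t ≤ 3 / 2 * exp (C * T) * (A 0 + B 0) := by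
  set N : ℝ → ℝ := fun s => |A s| + |B s| + |U s|
  have comparable (s : ℝ) (hs : s ∈ Icc 0 T) :
      A s + B s ≤ N s ∧ N s ≤ 3 / 2 * (A s + B s) := by
    have hU_le := abs_le_add_div_two_of_sq_le_mul (hA_nonneg s hs) (hB_nonneg s hs) (hUAB s hs)
    simp only [N, abs_of_nonneg (hA_nonneg s hs), abs_of_nonneg (hB_nonneg s hs)]
    constructor <;> linarith [abs_nonneg (U s)]
  have hx : ∀ i, ∀ s ∈ Icc 0 T, HasDerivAt (![A, B, U] i) (![A' s, B' s, U' s] i) s := by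
    intro i
    fin_cases i
    exacts [hA, hB, hU]
  obtain ⟨forward, backward⟩ := sum_abs_le_exp_mul_sum_abs_of_sum_abs_deriv_le hx
    (by simpa [Fin.sum_univ_three, add_assoc] using hbound) ht
  simp only [Fin.sum_univ_three, sub_zero] at forward backward
  have hexp : exp (C * t) ≤ exp (C * T) := exp_le_exp.2 (mul_le_mul_of_nonneg_left ht.2 hC)
  have hN_nonneg : 0 ≤ N t := by positivity
  have h0 : (0 : ℝ) ∈ Icc 0 T := left_mem_Icc.2 (ht.1.trans ht.2)
  constructor
  · calc 2 / 3 * exp (-(C * T)) * (A 0 + B 0)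
        ≤ 2 / 3 * exp (-(C * T)) * (exp (C * T) * (3 / 2 * (A t + B t))) := by
          gcongr
          calc A 0 + B 0 ≤ N 0 := (comparable 0 h0).1
            _ ≤ exp (C * t) * N t := by simpa [N, add_assoc] using backward
            _ ≤ exp (C * T) * (3 / 2 * (A t + B t)) := by
              gcongr
              exact (comparable t ht).2
      _ = A t + B t := by
          rw [exp_neg]
          field_simp
  · calc A t + B t ≤ N t := (comparable t ht).1
      _ ≤ exp (C * t) * N 0 := by simpa [N, add_assoc] using forward
      _ ≤ exp (C * T) * (3 / 2 * (A 0 + B 0)) := by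
          gcongr
          exact (comparable 0 h0).2
      _ = 3 / 2 * exp (C * T) * (A 0 + B 0) := by ring

theorem stmt15_general (T C c : ℝ) (hC : 0 ≤ C)
    (a b u a' b' u' : ℝ → ℝ → ℝ)
    (h : ∀ᵐ ξ ∂(volume : Measure ℝ), ∀ t ∈ Set.Icc (0 : ℝ) T,
      HasDerivAt (fun s => a s ξ) (a' t ξ) t ∧
      HasDerivAt (fun s => b s ξ) (b' t ξ) t ∧
      HasDerivAt (fun s => u s ξ) (u' t ξ) t ∧
      0 ≤ a t ξ ∧ 0 ≤ b t ξ ∧ (u t ξ) ^ 2 ≤ a t ξ * b t ξ ∧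
      |a' t ξ| + |b' t ξ| + |u' t ξ| ≤
        C * (|a t ξ| + |b t ξ| + |u t ξ|)) :
    (∀ᵐ ξ ∂(volume : Measure ℝ), 1 / c ≤ a 0 ξ + b 0 ξ →
      ∀ t ∈ Set.Icc (0 : ℝ) T,
        (2 / (3 * c)) * Real.exp (-C * T) ≤ a t ξ + b t ξ) ∧
    (∀ᵐ ξ ∂(volume : Measure ℝ), a 0 ξ + b 0 ξ ≤ c →
      ∀ t ∈ Set.Icc (0 : ℝ) T,
        a t ξ + b t ξ ≤ (3 * c / 2) * Real.exp (C * T)) := by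
  have bounds : ∀ᵐ ξ ∂(volume : Measure ℝ), ∀ t ∈ Icc 0 T,
      2 / 3 * exp (-(C * T)) * (a 0 ξ + b 0 ξ) ≤ a t ξ + b t ξ ∧
        a t ξ + b t ξ ≤ 3 / 2 * exp (C * T) * (a 0 ξ + b 0 ξ) := by
    filter_upwards [h] with ξ hξ t ht
    exact exp_bounds_add_of_sq_le_mul hC (fun s hs => (hξ s hs).1)
      (fun s hs => (hξ s hs).2.1) (fun s hs => (hξ s hs).2.2.1) (fun s hs => (hξ s hs).2.2.2.1)
      (fun s hs => (hξ s hs).2.2.2.2.1) (fun s hs => (hξ s hs).2.2.2.2.2.1)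
      (fun s hs => (hξ s hs).2.2.2.2.2.2) ht
  constructor
  · filter_upwards [bounds] with ξ hξ h0 t ht
    calc 2 / (3 * c) * exp (-C * T) = 2 / 3 * exp (-(C * T)) * (1 / c) := by ring_nf
      _ ≤ 2 / 3 * exp (-(C * T)) * (a 0 ξ + b 0 ξ) := by gcongr
      _ ≤ a t ξ + b t ξ := (hξ t ht).1
  · filter_upwards [bounds] with ξ hξ h0 t ht
    calc a t ξ + b t ξ ≤ 3 / 2 * exp (C * T) * (a 0 ξ + b 0 ξ) := (hξ t ht).2
      _ ≤ 3 / 2 * exp (C * T) * c := by gcongr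
      _ = 3 * c / 2 * exp (C * T) := by ring

/-- Preservation of lower and upper bounds on `y_ξ + H_ξ` along the flow.
Write `a(t,ξ) = y_ξ(t,ξ)`, `b(t,ξ) = H_ξ(t,ξ)`, `u(t,ξ) = U_ξ(t,ξ)`.  The
compatibility identity `y_ξ H_ξ = y_ξ²U² + U_ξ²` preserved by the flow yields
`u² ≤ a b`; assume moreover `a, b ≥ 0` and that the coefficients of the
linearized system are bounded by `C`, i.e.
`|a_t| + |b_t| + |u_t| ≤ C (|a| + |b| + |u|)` on `[0,T]`, for a.e. `ξ`.
If `a(0,ξ) + b(0,ξ) ≥ 1/c` then `a(t,ξ) + b(t,ξ) ≥ (2/(3c)) e^{-CT}` for all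
`t ∈ [0,T]` and a.e. `ξ`; similarly if `a(0,ξ) + b(0,ξ) ≤ c` then
`a(t,ξ) + b(t,ξ) ≤ (3c/2) e^{CT}`. -/
theorem stmt15 (T C c : ℝ) (hT : 0 ≤ T) (hC : 0 ≤ C) (hc : 0 < c)
    (a b u a' b' u' : ℝ → ℝ → ℝ)
    (h : ∀ᵐ ξ ∂(volume : Measure ℝ), ∀ t ∈ Set.Icc (0 : ℝ) T,
      HasDerivAt (fun s => a s ξ) (a' t ξ) t ∧
      HasDerivAt (fun s => b s ξ) (b' t ξ) t ∧
      HasDerivAt (fun s => u s ξ) (u' t ξ) t ∧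
      0 ≤ a t ξ ∧ 0 ≤ b t ξ ∧ (u t ξ) ^ 2 ≤ a t ξ * b t ξ ∧
      |a' t ξ| + |b' t ξ| + |u' t ξ| ≤
        C * (|a t ξ| + |b t ξ| + |u t ξ|)) :
    (∀ᵐ ξ ∂(volume : Measure ℝ), 1 / c ≤ a 0 ξ + b 0 ξ →
      ∀ t ∈ Set.Icc (0 : ℝ) T,
        (2 / (3 * c)) * Real.exp (-C * T) ≤ a t ξ + b t ξ) ∧
    (∀ᵐ ξ ∂(volume : Measure ℝ), a 0 ξ + b 0 ξ ≤ c →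
      ∀ t ∈ Set.Icc (0 : ℝ) T,
        a t ξ + b t ξ ≤ (3 * c / 2) * Real.exp (C * T)) :=
  stmt15_general T C c hC a b u a' b' u' h
end

section
/- For u ∈ H¹(ℝ) and a positive Radon measure μ on ℝ with ∫ over ℝ of dμ < ∞, define y(ξ) = sup{y : μ((-∞,y)) + y < ξ}, H(ξ) = ξ - y(ξ), U(ξ) = u(y(ξ)). Then y and H are both nondecreasing, y_ξ, H_ξ ≥ 0 and y_ξ + H_ξ = 1 almost everywhere, and H(ξ) → 0 as ξ → -∞. -/
open MeasureTheory Filter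

/-- For `u ∈ H¹(ℝ)` and a finite positive Radon measure `μ` on `ℝ`, define
`y(ξ) = sup{x : μ((-∞,x)) + x < ξ}`, `H(ξ) = ξ - y(ξ)` (and `U = u∘y`).  Then
`y` is nondecreasing and `1`-Lipschitz, `H` is nondecreasing,
`y_ξ, H_ξ ≥ 0` with `y_ξ + H_ξ = 1` almost everywhere, and `H(ξ) → 0` as
`ξ → -∞`. -/
theorem stmt17 (u : ℝ → ℝ)
    (hu : Continuous u ∧ MemLp u 2 (volume : Measure ℝ) ∧
      MemLp (deriv u) 2 (volume : Measure ℝ))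
    (μ : Measure ℝ) [IsFiniteMeasure μ] :
    letI y : ℝ → ℝ := fun ξ => sSup {x : ℝ | (μ (Set.Iio x)).toReal + x < ξ}
    letI H : ℝ → ℝ := fun ξ => ξ - y ξ
    letI U : ℝ → ℝ := fun ξ => u (y ξ)
    Monotone y ∧ LipschitzWith 1 y ∧ Monotone H ∧
    (∀ᵐ ξ ∂(volume : Measure ℝ),
      0 ≤ deriv y ξ ∧ 0 ≤ deriv H ξ ∧ deriv y ξ + deriv H ξ = 1) ∧
    Tendsto H atBot (nhds 0) := by
  set S : ℝ → Set ℝ := fun ξ => {x : ℝ | (μ (Set.Iio x)).toReal + x < ξ} with hS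
  set y : ℝ → ℝ := fun ξ => sSup (S ξ) with hy
  set H : ℝ → ℝ := fun ξ => ξ - y ξ with hHdef
  -- basic facts
  have hne : ∀ ξ : ℝ, (S ξ).Nonempty := by
    intro ξ
    refine ⟨ξ - (μ Set.univ).toReal - 1, ?_⟩
    have h1 : (μ (Set.Iio (ξ - (μ Set.univ).toReal - 1))).toReal ≤ (μ Set.univ).toReal :=
      ENNReal.toReal_mono (measure_ne_top μ _) (measure_mono (Set.subset_univ _))
    simp only [hS, Set.mem_setOf_eq]
    linarith
  have hbdd : ∀ ξ : ℝ, BddAbove (S ξ) := by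
    intro ξ
    refine ⟨ξ, fun x hx => ?_⟩
    have h0 : (0:ℝ) ≤ (μ (Set.Iio x)).toReal := ENNReal.toReal_nonneg
    have := hx
    simp only [hS, Set.mem_setOf_eq] at this
    linarith
  have hmono_S : ∀ ⦃a b : ℝ⦄, a ≤ b → S a ⊆ S b := by
    intro a b hab x hx
    simp only [hS, Set.mem_setOf_eq] at hx ⊢; linarith
  have hymono : Monotone y := fun a b hab => csSup_le_csSup (hbdd b) (hne a) (hmono_S hab)
  -- Lipschitz key estimate
  have hlip_le : ∀ a b : ℝ, a ≤ b → y b ≤ y a + (b - a) := by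
    intro a b hab
    refine csSup_le (hne b) fun x hx => ?_
    have hxa : x - (b - a) ∈ S a := by
      simp only [hS, Set.mem_setOf_eq] at hx ⊢
      have hmm : (μ (Set.Iio (x - (b - a)))).toReal ≤ (μ (Set.Iio x)).toReal :=
        ENNReal.toReal_mono (measure_ne_top μ _)
          (measure_mono (Set.Iio_subset_Iio (by linarith)))
      linarith
    have := le_csSup (hbdd a) hxa
    linarith
  have hlip : LipschitzWith 1 y := by
    refine LipschitzWith.of_dist_le_mul fun a b => ?_
    rw [Real.dist_eq, Real.dist_eq, NNReal.coe_one, one_mul]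
    rcases le_total a b with hab | hab
    · have h1 := hymono hab
      have h2 := hlip_le a b hab
      have e1 : |a - b| = b - a := by rw [abs_sub_comm]; exact abs_of_nonneg (by linarith)
      have e2 : |y a - y b| = y b - y a := by rw [abs_sub_comm]; exact abs_of_nonneg (by linarith)
      rw [e1, e2]; linarith
    · have h1 := hymono hab
      have h2 := hlip_le b a hab
      have e1 : |a - b| = a - b := abs_of_nonneg (by linarith)
      have e2 : |y a - y b| = y a - y b := abs_of_nonneg (by linarith)
      rw [e1, e2]; linarith
  have hHmono : Monotone H := by
    intro a b hab
    have := hlip_le a b hab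
    simp only [hHdef]
    linarith
  refine ⟨hymono, hlip, hHmono, ?_, ?_⟩
  · -- a.e. derivative statement
    have hHlip : LipschitzWith 1 H := by
      refine LipschitzWith.of_dist_le_mul fun a b => ?_
      rw [Real.dist_eq, Real.dist_eq, NNReal.coe_one, one_mul]
      rcases le_total a b with hab | hab
      · have h1 := hHmono hab
        have h2 := hymono hab
        have e1 : |a - b| = b - a := by rw [abs_sub_comm]; exact abs_of_nonneg (by linarith)
        have e2 : |H a - H b| = H b - H a := by
          rw [abs_sub_comm]; exact abs_of_nonneg (by linarith)
        rw [e1, e2]; simp only [hHdef]; linarith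
      · have h1 := hHmono hab
        have h2 := hymono hab
        have e1 : |a - b| = a - b := abs_of_nonneg (by linarith)
        have e2 : |H a - H b| = H a - H b := abs_of_nonneg (by linarith)
        rw [e1, e2]; simp only [hHdef]; linarith
    filter_upwards [hlip.ae_differentiableAt (μ := volume)] with ξ hdiff
    have hd1 : deriv y ξ ≤ 1 := by
      have := norm_deriv_le_of_lipschitz (𝕜 := ℝ) hlip (x₀ := ξ)
      rw [Real.norm_eq_abs] at this
      exact (abs_le.1 (by simpa using this)).2
    have hdH : deriv H ξ = 1 - deriv y ξ := by
      have : HasDerivAt H (1 - deriv y ξ) ξ :=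
        (hasDerivAt_id ξ).sub hdiff.hasDerivAt
      exact this.deriv
    have hdH1 : deriv H ξ ≤ 1 := by
      have := norm_deriv_le_of_lipschitz (𝕜 := ℝ) hHlip (x₀ := ξ)
      rw [Real.norm_eq_abs] at this
      exact (abs_le.1 (by simpa using this)).2
    have hd0 : 0 ≤ deriv y ξ := by rw [hdH] at hdH1; linarith
    refine ⟨hd0, by rw [hdH]; linarith, by rw [hdH]; ring⟩
  · -- H → 0 at -∞
    have hH0 : ∀ ξ : ℝ, 0 ≤ H ξ := by
      intro ξ
      have : y ξ ≤ ξ := csSup_le (hne ξ) fun x hx => by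
        have h0 : (0:ℝ) ≤ (μ (Set.Iio x)).toReal := ENNReal.toReal_nonneg
        simp only [hS, Set.mem_setOf_eq] at hx; linarith
      simp only [hHdef]; linarith
    have hHle : ∀ ξ : ℝ, H ξ ≤ (μ (Set.Iio ξ)).toReal := by
      intro ξ
      have key : ∀ ε : ℝ, 0 < ε → H ξ ≤ (μ (Set.Iio ξ)).toReal + ε := by
        intro ε hε
        have hx : ξ - (μ (Set.Iio ξ)).toReal - ε ∈ S ξ := by
          simp only [hS, Set.mem_setOf_eq]
          have hmm : (μ (Set.Iio (ξ - (μ (Set.Iio ξ)).toReal - ε))).toReal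
              ≤ (μ (Set.Iio ξ)).toReal :=
            ENNReal.toReal_mono (measure_ne_top μ _)
              (measure_mono (Set.Iio_subset_Iio
                (by have := ENNReal.toReal_nonneg (a := μ (Set.Iio ξ)); linarith)))
          linarith
        have := le_csSup (hbdd ξ) hx
        simp only [hHdef]; linarith
      exact le_of_forall_pos_le_add key
    have hμ : Tendsto (fun ξ : ℝ => (μ (Set.Iio ξ)).toReal) atBot (nhds 0) := by
      have h1 : Tendsto (fun ξ : ℝ => μ (Set.Iio ξ)) atBot (nhds 0) := by
        have := tendsto_measure_iInter_atBot (μ := μ) (s := fun ξ : ℝ => Set.Iio ξ)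
          (fun ξ => measurableSet_Iio.nullMeasurableSet) (fun a b hab => Set.Iio_subset_Iio hab)
          ⟨0, measure_ne_top μ _⟩
        have hempty : ⋂ ξ : ℝ, Set.Iio ξ = ∅ := by
          ext x; simp only [Set.mem_iInter, Set.mem_Iio, Set.mem_empty_iff_false, iff_false,
            not_forall, not_lt]
          exact ⟨x, le_refl x⟩
        rw [hempty] at this
        simpa [Function.comp_def] using this
      have h2 := (ENNReal.tendsto_toReal (a := 0) (by simp)).comp h1
      simpa [Function.comp_def] using h2
    exact squeeze_zero hH0 hHle hμ
end
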